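/- arXiv:2509.15960 — 4 statements merged into one kernel-verified Lean document; each statement's English description precedes it below -/
import Mathlib

section
/- Convolution estimate, minimum case (Lemma 2.3(1)). Let γ > 0, let f : ℝ → ℝ be twice continuously differentiable with f'' ≥ γ on ℝ, and let g : ℝ → ℝ be continuous, attaining its minimum m = min_ℝ g at some point c ∈ ℝ. Assume the map φ = √((g − m)/γ) is K-Lipschitz with 0 < K ≤ 1, and set α = (√(1+8K²) − 1)/(4K²). Let u : ℝ → ℝ be a bounded continuously differentiable function with bounded derivative u'. Then for every x ∈ ℝ and for either choice of sign, ∫_ℝ p(x − y) 1_{ℝ^±}(x − y) [ g(u(y)) + (f''(u(y))/2) u'(y)² ] dy ≥ (α/2)( g(u(x)) − m ) + m/2, where 1_{ℝ^+} and 1_{ℝ^-} denote the indicator functions of the positive and negative half-lines. -/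
open MeasureTheory Set

/-- The kernel `p(x) = (1/2) e^{-|x|}`. -/
noncomputable def pker (x : ℝ) : ℝ := (1 / 2) * Real.exp (-|x|)

/-!
Along either half-line issuing from `x`, put `W(t) = φ(u(x ∓ t))` and `q(t) = |u'(x ∓ t)|`.
Since `f'' ≥ γ` and `g = m + γφ²`, the integrand is at least `m + γ(W² + q²/2)`, so it suffices
to show `∫₀^∞ e^{-t}(W² + q²/2) ≥ αW(0)²`. The Lipschitz bound gives `W ≥ Y := W(0) - K∫₀^t q`,
and as long as `Y ≥ 0`, the identity
`e^{-t}(Y² + q²/2) = (d/dt)(-αe^{-t}Y²) + e^{-t}(2KαY - q)²/2`, valid because `2K²α² + α = 1`,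
integrates to the bound up to a boundary term, which vanishes at the first zero of `Y` or
as `t → ∞`.
-/

open Filter Real Topology

lemma alpha_nonneg_and_root {K α : ℝ} (hK : K ≠ 0)
    (hα : α = (√(1 + 8 * K ^ 2) - 1) / (4 * K ^ 2)) :
    0 ≤ α ∧ 2 * K ^ 2 * α ^ 2 + α = 1 := by
  have hs : √(1 + 8 * K ^ 2) ^ 2 = 1 + 8 * K ^ 2 := sq_sqrt (by positivity)
  have hs1 : 1 ≤ √(1 + 8 * K ^ 2) := one_le_sqrt.2 (by nlinarith)
  subst hα
  set s := √(1 + 8 * K ^ 2)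
  constructor
  · exact div_nonneg (by linarith) (by positivity)
  · field_simp
    linear_combination 2 * hs

lemma mul_sq_add_mul_le_sq_add_half_sq {K α : ℝ} (hα : 2 * K ^ 2 * α ^ 2 + α = 1) (z q : ℝ) :
    α * z ^ 2 + 2 * α * K * z * q ≤ z ^ 2 + q ^ 2 / 2 := by
  nlinarith [sq_nonneg (2 * K * α * z - q)]

lemma sub_le_integral_exp_neg_mul_sq_add {K α : ℝ} (hα : 2 * K ^ 2 * α ^ 2 + α = 1)
    {Y q : ℝ → ℝ} (hq : Continuous q) (hY : ∀ t, HasDerivAt Y (-(K * q t)) t)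
    {T : ℝ} (hT : 0 ≤ T) :
    α * Y 0 ^ 2 - α * exp (-T) * Y T ^ 2 ≤
      ∫ t in 0..T, exp (-t) * (Y t ^ 2 + q t ^ 2 / 2) := by
  have hYc : Continuous Y := continuous_iff_continuousAt.2 fun t => (hY t).continuousAt
  have hderiv : ∀ t, HasDerivAt (fun t => -α * exp (-t) * Y t ^ 2)
      (exp (-t) * (α * Y t ^ 2 + 2 * α * K * Y t * q t)) t := fun t => by
    refine ((((hasDerivAt_neg t).exp).const_mul (-α)).fun_mul ((hY t).fun_pow 2)).congr_deriv ?_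
    push_cast
    ring
  calc α * Y 0 ^ 2 - α * exp (-T) * Y T ^ 2
      = ∫ t in 0..T, exp (-t) * (α * Y t ^ 2 + 2 * α * K * Y t * q t) := by
        rw [intervalIntegral.integral_eq_sub_of_hasDerivAt (fun t _ => hderiv t)
          (by apply Continuous.intervalIntegrable; fun_prop)]
        simp only [neg_zero, exp_zero]
        ring
    _ ≤ ∫ t in 0..T, exp (-t) * (Y t ^ 2 + q t ^ 2 / 2) := by
        refine intervalIntegral.integral_mono_on hT ?_ ?_ fun t _ => ?_
        · apply Continuous.intervalIntegrable; fun_prop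
        · apply Continuous.intervalIntegrable; fun_prop
        · exact mul_le_mul_of_nonneg_left (mul_sq_add_mul_le_sq_add_half_sq hα _ _) (exp_pos _).le

lemma mul_sq_le_integral_exp_neg_mul_sq_add {K α a : ℝ} (hK : 0 ≤ K) (hα0 : 0 ≤ α)
    (hα : 2 * K ^ 2 * α ^ 2 + α = 1) (ha : 0 ≤ a) {W q : ℝ → ℝ} (hq : Continuous q)
    (hq0 : ∀ t, 0 ≤ q t)
    (hWq : ∀ t, 0 ≤ t → a - K * ∫ s in 0..t, q s ≤ W t)
    (hint : IntegrableOn (fun t => exp (-t) * (W t ^ 2 + q t ^ 2 / 2)) (Ioi 0)) :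
    α * a ^ 2 ≤ ∫ t in Ioi 0, exp (-t) * (W t ^ 2 + q t ^ 2 / 2) := by
  set I := ∫ t in Ioi 0, exp (-t) * (W t ^ 2 + q t ^ 2 / 2)
  set Y : ℝ → ℝ := fun t => a - K * ∫ s in 0..t, q s
  have hY : ∀ t, HasDerivAt Y (-(K * q t)) t := fun t =>
    (((intervalIntegral.integral_hasDerivAt_right (hq.intervalIntegrable 0 t)
      hq.stronglyMeasurable.stronglyMeasurableAtFilter hq.continuousAt).const_mul K).const_sub a)
  have hYc : Continuous Y := continuous_iff_continuousAt.2 fun t => (hY t).continuousAt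
  have hY0 : Y 0 = a := by simp [Y]
  have hYanti : Antitone Y :=
    antitone_of_hasDerivAt_nonpos hY fun t => neg_nonpos.2 (mul_nonneg hK (hq0 t))
  have before_zero : ∀ T, 0 ≤ T → 0 ≤ Y T → α * a ^ 2 - α * exp (-T) * Y T ^ 2 ≤ I := by
    intro T hT hYT
    calc α * a ^ 2 - α * exp (-T) * Y T ^ 2
        ≤ ∫ t in 0..T, exp (-t) * (Y t ^ 2 + q t ^ 2 / 2) :=
          hY0 ▸ sub_le_integral_exp_neg_mul_sq_add hα hq hY hT
      _ ≤ ∫ t in 0..T, exp (-t) * (W t ^ 2 + q t ^ 2 / 2) := by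
          refine intervalIntegral.integral_mono_on hT
            (by apply Continuous.intervalIntegrable; fun_prop) ?_ fun t ht => ?_
          · exact (intervalIntegrable_iff_integrableOn_Ioc_of_le hT).2
              (hint.mono_set Ioc_subset_Ioi_self)
          · have hYt : 0 ≤ Y t := hYT.trans (hYanti ht.2)
            gcongr
            exact hWq t ht.1
      _ ≤ I := by
          rw [intervalIntegral.integral_of_le hT]
          exact setIntegral_mono_set hint (ae_of_all _ fun t => by positivity)
            Ioc_subset_Ioi_self.eventuallyLE
  have bound : ∀ T, 0 ≤ T → α * a ^ 2 ≤ I + α * exp (-T) * a ^ 2 := by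
    intro T hT
    by_cases hYT : 0 ≤ Y T
    · have : Y T ^ 2 ≤ a ^ 2 := by
        rw [← hY0]; exact pow_le_pow_left₀ hYT (hYanti hT) 2
      nlinarith [before_zero T hT hYT,
        mul_le_mul_of_nonneg_left this (mul_nonneg hα0 (exp_pos (-T)).le)]
    · obtain ⟨T₀, hT₀, hYT₀⟩ := intermediate_value_Icc' hT hYc.continuousOn
        ⟨(not_le.1 hYT).le, hY0 ▸ ha⟩
      have := before_zero T₀ hT₀.1 hYT₀.ge
      rw [hYT₀] at this
      have : 0 ≤ α * exp (-T) * a ^ 2 := by positivity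
      linarith
  have hlim : Tendsto (fun T => I + α * exp (-T) * a ^ 2) atTop (𝓝 (I + α * 0 * a ^ 2)) :=
    ((tendsto_exp_neg_atTop_nhds_zero.const_mul α).mul_const _).const_add I
  simpa using ge_of_tendsto hlim (eventually_atTop.2 ⟨0, bound⟩)

lemma integrableOn_exp_neg_mul_comp {E : Type*} [NormedAddCommGroup E] [ProperSpace E]
    {Φ : E → ℝ} (hΦ : Continuous Φ) {p : ℝ → E} (hp : Continuous p) {C : ℝ}
    (hpC : ∀ t, ‖p t‖ ≤ C) :
    IntegrableOn (fun t => exp (-t) * Φ (p t)) (Ioi 0) := by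
  obtain ⟨M, hM⟩ :=
    (isCompact_closedBall (0 : E) C).exists_bound_of_continuousOn hΦ.continuousOn
  exact (integrableOn_exp_neg_Ioi 0).mul_bdd (hΦ.comp hp).aestronglyMeasurable
    (ae_of_all _ fun t => hM (p t) (mem_closedBall_zero_iff.2 (hpC t)))

lemma abs_sub_le_integral_abs_deriv {v : ℝ → ℝ} (hv : ContDiff ℝ 1 v) {a b : ℝ} (hab : a ≤ b) :
    |v b - v a| ≤ ∫ s in a..b, |deriv v s| := by
  rw [← intervalIntegral.integral_deriv_eq_sub
    (fun s _ => (hv.differentiable one_ne_zero).differentiableAt)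
    ((hv.continuous_deriv le_rfl).intervalIntegrable a b)]
  exact intervalIntegral.abs_integral_le_integral_abs hab

lemma integral_pker_mul_indicator_Ioi_self (H : ℝ → ℝ) :
    ∫ t, pker t * (Ioi (0 : ℝ)).indicator (fun _ => 1) t * H t =
      2⁻¹ * ∫ t in Ioi 0, exp (-t) * H t := by
  rw [← integral_const_mul, ← integral_indicator measurableSet_Ioi]
  congr 1 with t
  by_cases ht : t ∈ Ioi (0 : ℝ)
  · simp only [pker, one_div, abs_of_pos (mem_Ioi.1 ht), ht, indicator_of_mem, mul_one]
    ring
  · simp [ht]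

lemma integral_pker_mul_indicator_Ioi (F : ℝ → ℝ) (x : ℝ) :
    ∫ y, pker (x - y) * (Ioi (0 : ℝ)).indicator (fun _ => 1) (x - y) * F y =
      2⁻¹ * ∫ t in Ioi 0, exp (-t) * F (x - t) := by
  rw [← integral_pker_mul_indicator_Ioi_self,
    ← integral_sub_left_eq_self
      (fun t => pker t * (Ioi (0 : ℝ)).indicator (fun _ => 1) t * F (x - t)) volume x]
  simp only [sub_sub_cancel]

lemma integral_pker_mul_indicator_Iio (F : ℝ → ℝ) (x : ℝ) :
    ∫ y, pker (x - y) * (Iio (0 : ℝ)).indicator (fun _ => 1) (x - y) * F y =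
      2⁻¹ * ∫ t in Ioi 0, exp (-t) * F (x + t) := by
  rw [← integral_pker_mul_indicator_Ioi_self,
    ← integral_add_left_eq_self
      (fun y => pker (x - y) * (Iio (0 : ℝ)).indicator (fun _ => 1) (x - y) * F y) x]
  congr 1 with t
  simp [pker, indicator]

lemma half_line_estimate {γ m K α : ℝ} (hγ : 0 < γ) (hK : 0 ≤ K) (hα0 : 0 ≤ α)
    (hα : 2 * K ^ 2 * α ^ 2 + α = 1) {g k φ : ℝ → ℝ} (hk : Continuous k) (hkγ : ∀ a, γ ≤ k a)
    (hgφ : ∀ a, g a = m + γ * φ a ^ 2) (hφ0 : ∀ a, 0 ≤ φ a)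
    (hLip : ∀ a b, |φ a - φ b| ≤ K * |a - b|)
    {v : ℝ → ℝ} (hv : ContDiff ℝ 1 v) {C : ℝ} (hvC : ∀ t, |v t| ≤ C ∧ |deriv v t| ≤ C) :
    α / 2 * (g (v 0) - m) + m / 2 ≤
      2⁻¹ * ∫ t in Ioi 0, exp (-t) * (g (v t) + k (v t) / 2 * deriv v t ^ 2) := by
  have hφc : Continuous φ :=
    (LipschitzWith.of_dist_le' fun a b => by simpa only [Real.dist_eq] using hLip a b).continuous
  have hgc : Continuous g := by rw [funext hgφ]; fun_prop
  have hvc : Continuous v := hv.continuous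
  have hv'c : Continuous (deriv v) := hv.continuous_deriv le_rfl
  have hpC : ∀ t, ‖(v t, deriv v t)‖ ≤ C := fun t => by
    simpa [Prod.norm_def] using hvC t
  set I := ∫ t in Ioi 0, exp (-t) * (φ (v t) ^ 2 + |deriv v t| ^ 2 / 2)
  have hint : IntegrableOn (fun t => exp (-t) * (φ (v t) ^ 2 + |deriv v t| ^ 2 / 2)) (Ioi 0) :=
    integrableOn_exp_neg_mul_comp (Φ := fun z : ℝ × ℝ => φ z.1 ^ 2 + |z.2| ^ 2 / 2)
      (by fun_prop) (hvc.prodMk hv'c) hpC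
  have hintF : IntegrableOn
      (fun t => exp (-t) * (g (v t) + k (v t) / 2 * deriv v t ^ 2)) (Ioi 0) :=
    integrableOn_exp_neg_mul_comp (Φ := fun z : ℝ × ℝ => g z.1 + k z.1 / 2 * z.2 ^ 2)
      (by fun_prop) (hvc.prodMk hv'c) hpC
  have hφv : ∀ t, 0 ≤ t → φ (v 0) - K * ∫ s in 0..t, |deriv v s| ≤ φ (v t) := fun t ht => by
    have hvt : |v 0 - v t| ≤ ∫ s in 0..t, |deriv v s| :=
      (abs_sub_comm _ _).trans_le (abs_sub_le_integral_abs_deriv hv ht)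
    have := (le_abs_self _).trans ((hLip (v 0) (v t)).trans (mul_le_mul_of_nonneg_left hvt hK))
    linarith
  have hcore : α * φ (v 0) ^ 2 ≤ I :=
    mul_sq_le_integral_exp_neg_mul_sq_add hK hα0 hα (hφ0 _) hv'c.abs (fun t => abs_nonneg _)
      hφv hint
  have hpointwise : ∀ t, exp (-t) * m + γ * (exp (-t) * (φ (v t) ^ 2 + |deriv v t| ^ 2 / 2)) ≤
      exp (-t) * (g (v t) + k (v t) / 2 * deriv v t ^ 2) := fun t => by
    rw [hgφ, sq_abs]
    have : γ / 2 * deriv v t ^ 2 ≤ k (v t) / 2 * deriv v t ^ 2 := by gcongr; exact hkγ _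
    nlinarith [exp_pos (-t)]
  calc α / 2 * (g (v 0) - m) + m / 2 = 2⁻¹ * (m + γ * (α * φ (v 0) ^ 2)) := by
        rw [hgφ]; ring
    _ ≤ 2⁻¹ * (m + γ * I) := by gcongr
    _ = 2⁻¹ * ∫ t in Ioi 0,
          exp (-t) * m + γ * (exp (-t) * (φ (v t) ^ 2 + |deriv v t| ^ 2 / 2)) := by
        rw [integral_add ((integrableOn_exp_neg_Ioi 0).mul_const m) (hint.const_mul γ),
          integral_mul_const, integral_const_mul, integral_exp_neg_Ioi_zero, one_mul]
    _ ≤ _ := mul_le_mul_of_nonneg_left (setIntegral_mono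
          (((integrableOn_exp_neg_Ioi 0).mul_const m).add (hint.const_mul γ)) hintF hpointwise)
          (by norm_num)

theorem convolution_estimate_min_general
    (γ : ℝ) (hγ : 0 < γ)
    (f : ℝ → ℝ) (hf : ContDiff ℝ 2 f) (hconv : ∀ x : ℝ, γ ≤ deriv (deriv f) x)
    (g : ℝ → ℝ)
    (m : ℝ) (hmin : ∀ x : ℝ, m ≤ g x)
    (K : ℝ) (hK0 : 0 < K)
    (φ : ℝ → ℝ) (hφ : ∀ x : ℝ, φ x = Real.sqrt ((g x - m) / γ))
    (hLip : ∀ a b : ℝ, |φ a - φ b| ≤ K * |a - b|)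
    (α : ℝ) (hα : α = (Real.sqrt (1 + 8 * K ^ 2) - 1) / (4 * K ^ 2))
    (u : ℝ → ℝ) (hu : ContDiff ℝ 1 u)
    (hbd : ∃ C : ℝ, ∀ x : ℝ, |u x| ≤ C ∧ |deriv u x| ≤ C) :
    ∀ x : ℝ,
      (α / 2) * (g (u x) - m) + m / 2 ≤
        ∫ y : ℝ, pker (x - y) * Set.indicator (Set.Ioi (0 : ℝ)) (fun _ => (1 : ℝ)) (x - y) *
          (g (u y) + deriv (deriv f) (u y) / 2 * (deriv u y) ^ 2) ∧
      (α / 2) * (g (u x) - m) + m / 2 ≤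
        ∫ y : ℝ, pker (x - y) * Set.indicator (Set.Iio (0 : ℝ)) (fun _ => (1 : ℝ)) (x - y) *
          (g (u y) + deriv (deriv f) (u y) / 2 * (deriv u y) ^ 2) := by
  obtain ⟨hα0, hαroot⟩ := alpha_nonneg_and_root hK0.ne' hα
  obtain ⟨C, hC⟩ := hbd
  have hgφ : ∀ a, g a = m + γ * φ a ^ 2 := fun a => by
    rw [hφ, sq_sqrt (div_nonneg (sub_nonneg.2 (hmin a)) hγ.le)]
    field_simp
    ring
  have hφ0 : ∀ a, 0 ≤ φ a := fun a => hφ a ▸ sqrt_nonneg _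
  have hf'' : Continuous (deriv (deriv f)) := (hf.deriv' (n := 1)).continuous_deriv le_rfl
  have along := fun {v : ℝ → ℝ} (hv : ContDiff ℝ 1 v) (hvC : ∀ t, |v t| ≤ C ∧ |deriv v t| ≤ C) =>
    half_line_estimate hγ hK0.le hα0 hαroot hf'' hconv hgφ hφ0 hLip hv hvC
  intro x
  constructor
  · rw [integral_pker_mul_indicator_Ioi]
    simpa [deriv_comp_const_sub] using along (v := fun t => u (x - t))
      (hu.comp (contDiff_const.sub contDiff_id))
      (fun t => by simpa [deriv_comp_const_sub] using hC (x - t))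
  · rw [integral_pker_mul_indicator_Iio]
    simpa [deriv_comp_const_add] using along (v := fun t => u (x + t))
      (hu.comp (contDiff_const.add contDiff_id))
      (fun t => by simpa [deriv_comp_const_add] using hC (x + t))

/-- Convolution estimate, minimum case (Lemma 2.3(1)): for either choice of the
half-line indicator, `(p 1_{ℝ^±}) * (g(u) + f''(u)/2 u'²) ≥ (α/2)(g(u) - m) + m/2`. -/
theorem convolution_estimate_min
    (γ : ℝ) (hγ : 0 < γ)
    (f : ℝ → ℝ) (hf : ContDiff ℝ 2 f) (hconv : ∀ x : ℝ, γ ≤ deriv (deriv f) x)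
    (g : ℝ → ℝ) (hg : Continuous g)
    (c m : ℝ) (hgc : g c = m) (hmin : ∀ x : ℝ, m ≤ g x)
    (K : ℝ) (hK0 : 0 < K) (hK1 : K ≤ 1)
    (φ : ℝ → ℝ) (hφ : ∀ x : ℝ, φ x = Real.sqrt ((g x - m) / γ))
    (hLip : ∀ a b : ℝ, |φ a - φ b| ≤ K * |a - b|)
    (α : ℝ) (hα : α = (Real.sqrt (1 + 8 * K ^ 2) - 1) / (4 * K ^ 2))
    (u : ℝ → ℝ) (hu : ContDiff ℝ 1 u)
    (hbd : ∃ C : ℝ, ∀ x : ℝ, |u x| ≤ C ∧ |deriv u x| ≤ C) :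
    ∀ x : ℝ,
      (α / 2) * (g (u x) - m) + m / 2 ≤
        ∫ y : ℝ, pker (x - y) * Set.indicator (Set.Ioi (0 : ℝ)) (fun _ => (1 : ℝ)) (x - y) *
          (g (u y) + deriv (deriv f) (u y) / 2 * (deriv u y) ^ 2) ∧
      (α / 2) * (g (u x) - m) + m / 2 ≤
        ∫ y : ℝ, pker (x - y) * Set.indicator (Set.Iio (0 : ℝ)) (fun _ => (1 : ℝ)) (x - y) *
          (g (u y) + deriv (deriv f) (u y) / 2 * (deriv u y) ^ 2) :=
  convolution_estimate_min_general γ hγ f hf hconv g m hmin K hK0 φ hφ hLip α hα u hu hbd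
end

section
/- Sign persistence for the Riccati-type system (step in the proof of Theorem 1.2). Let γ > 0, T > 0, and let A, B : [0,T) → ℝ be differentiable functions such that A(0) > 0, B(0) < 0, and for all t ∈ [0,T): A'(t) ≥ −(γ/2) A(t) B(t) and B'(t) ≤ (γ/2) A(t) B(t). Then for every t ∈ [0,T) one has A(t) ≥ A(0) > 0 and B(t) ≤ B(0) < 0. -/
/-!
While `A > 0 > B`, the right-hand sides `-(γ/2) A B` and `(γ/2) A B` have signs that make `A`
nondecreasing and `B` nonincreasing, which in turn keeps `A ≥ A 0 > 0` and `B ≤ B 0 < 0`.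
Real induction on `[0, t]` turns this local statement into a global one: the set where
`A 0 ≤ A` and `B ≤ B 0` is closed and, at each of its points, contains a right neighbourhood.
-/

open Set Filter Topology

theorem eventually_nhdsGE_le_apply_of_hasDerivWithinAt {f f' : ℝ → ℝ} {s : Set ℝ} {x : ℝ}
    (hf : ∀ y ∈ s, HasDerivWithinAt f (f' y) s y) (hs : s ∈ 𝓝[≥] x)
    (hf' : ∀ᶠ y in 𝓝[≥] x, 0 ≤ f' y) : ∀ᶠ y in 𝓝[≥] x, f x ≤ f y := by
  obtain ⟨u, hxu, hsub⟩ := mem_nhdsGE_iff_exists_Ico_subset.1 (inter_mem hs hf')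
  have hus : Ico x u ⊆ s := fun y hy => (hsub hy).1
  have hmono : MonotoneOn f (Ico x u) := by
    refine monotoneOn_of_hasDerivWithinAt_nonneg (convex_Ico x u)
      (fun y hy => (hf y (hus hy)).continuousWithinAt.mono hus)
      (fun y hy => (hf y (hus (interior_subset hy))).mono (interior_subset.trans hus))
      (fun y hy => (hsub (interior_subset hy)).2)
  filter_upwards [Ico_mem_nhdsGE hxu] with y hy
  exact hmono (left_mem_Ico.2 hxu) hy hy.1

theorem eventually_nhdsGE_apply_le_of_hasDerivWithinAt {f f' : ℝ → ℝ} {s : Set ℝ} {x : ℝ}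
    (hf : ∀ y ∈ s, HasDerivWithinAt f (f' y) s y) (hs : s ∈ 𝓝[≥] x)
    (hf' : ∀ᶠ y in 𝓝[≥] x, f' y ≤ 0) : ∀ᶠ y in 𝓝[≥] x, f y ≤ f x := by
  have hneg := eventually_nhdsGE_le_apply_of_hasDerivWithinAt (f := fun y => -f y)
    (fun y hy => (hf y hy).neg) hs (hf'.mono fun _ hy => neg_nonneg.2 hy)
  exact hneg.mono fun _ hy => neg_le_neg_iff.1 hy

theorem riccati_eventually_nhdsGE_monotone {γ T : ℝ} (hγ : 0 ≤ γ) {A B A' B' : ℝ → ℝ}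
    (hA : ∀ t ∈ Ico (0 : ℝ) T, HasDerivWithinAt A (A' t) (Ico 0 T) t)
    (hB : ∀ t ∈ Ico (0 : ℝ) T, HasDerivWithinAt B (B' t) (Ico 0 T) t)
    (hA' : ∀ t ∈ Ico (0 : ℝ) T, -(γ / 2) * (A t * B t) ≤ A' t)
    (hB' : ∀ t ∈ Ico (0 : ℝ) T, B' t ≤ (γ / 2) * (A t * B t))
    {x : ℝ} (hx : x ∈ Ico (0 : ℝ) T) (hAx : 0 < A x) (hBx : B x < 0) :
    ∀ᶠ y in 𝓝[≥] x, A x ≤ A y ∧ B y ≤ B x := by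
  have hs : Ico 0 T ∈ 𝓝[≥] x :=
    mem_of_superset (Ico_mem_nhdsGE hx.2) (Ico_subset_Ico_left hx.1)
  have hle : 𝓝[≥] x ≤ 𝓝[Ico 0 T] x := nhdsWithin_le_of_mem hs
  have hsign : ∀ᶠ y in 𝓝[≥] x, y ∈ Ico 0 T ∧ A y * B y ≤ 0 := by
    filter_upwards [hs, hle ((hA x hx).continuousWithinAt.eventually (lt_mem_nhds hAx)),
      hle ((hB x hx).continuousWithinAt.eventually (gt_mem_nhds hBx))] with y hy hAy hBy
    exact ⟨hy, mul_nonpos_of_nonneg_of_nonpos hAy.le hBy.le⟩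
  have hγ2 : 0 ≤ γ / 2 := by positivity
  refine (eventually_nhdsGE_le_apply_of_hasDerivWithinAt hA hs ?_).and
    (eventually_nhdsGE_apply_le_of_hasDerivWithinAt hB hs ?_)
  · filter_upwards [hsign] with y ⟨hy, hAB⟩
    linarith [hA' y hy, mul_nonpos_of_nonneg_of_nonpos hγ2 hAB]
  · filter_upwards [hsign] with y ⟨hy, hAB⟩
    linarith [hB' y hy, mul_nonpos_of_nonneg_of_nonpos hγ2 hAB]

theorem riccati_sign_persistence_general
    (γ : ℝ) (hγ : 0 < γ) (T : ℝ)
    (A B A' B' : ℝ → ℝ)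
    (hA : ∀ t ∈ Set.Ico (0 : ℝ) T, HasDerivWithinAt A (A' t) (Set.Ico 0 T) t)
    (hB : ∀ t ∈ Set.Ico (0 : ℝ) T, HasDerivWithinAt B (B' t) (Set.Ico 0 T) t)
    (hA0 : 0 < A 0) (hB0 : B 0 < 0)
    (hA' : ∀ t ∈ Set.Ico (0 : ℝ) T, -(γ / 2) * (A t * B t) ≤ A' t)
    (hB' : ∀ t ∈ Set.Ico (0 : ℝ) T, B' t ≤ (γ / 2) * (A t * B t)) :
    ∀ t ∈ Set.Ico (0 : ℝ) T, A 0 ≤ A t ∧ B t ≤ B 0 := by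
  intro t ht
  set S : Set ℝ := {x | A 0 ≤ A x ∧ B x ≤ B 0}
  have hIcc : Icc 0 t ⊆ Ico 0 T := Icc_subset_Ico_right ht.2
  have hcont : ContinuousOn (fun x => (A x, B x)) (Icc 0 t) := fun x hx =>
    ((hA x (hIcc hx)).continuousWithinAt.prodMk (hB x (hIcc hx)).continuousWithinAt).mono hIcc
  have hclosed : IsClosed (S ∩ Icc 0 t) := by
    rw [inter_comm]
    exact hcont.preimage_isClosed_of_isClosed isClosed_Icc
      ((isClosed_le continuous_const continuous_fst).inter
        (isClosed_le continuous_snd continuous_const))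
  have hstep : ∀ x ∈ S ∩ Ico 0 t, S ∈ 𝓝[>] x := by
    rintro x ⟨⟨hAx, hBx⟩, hx⟩
    have hlocal := riccati_eventually_nhdsGE_monotone hγ.le hA hB hA' hB'
      (Ico_subset_Ico_right ht.2.le hx) (hA0.trans_le hAx) (hBx.trans_lt hB0)
    filter_upwards [nhdsWithin_mono x Ioi_subset_Ici_self hlocal] with y hy
    exact ⟨hAx.trans hy.1, hy.2.trans hBx⟩
  exact hclosed.Icc_subset_of_forall_mem_nhdsWithin ⟨le_rfl, le_rfl⟩ hstep ⟨ht.1, le_rfl⟩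

/-- Sign persistence for the Riccati-type system: if `A(0) > 0 > B(0)` and
`A' ≥ -(γ/2) A B`, `B' ≤ (γ/2) A B` on `[0,T)`, then `A(t) ≥ A(0) > 0` and
`B(t) ≤ B(0) < 0` for all `t ∈ [0,T)`. -/
theorem riccati_sign_persistence
    (γ : ℝ) (hγ : 0 < γ) (T : ℝ) (hT : 0 < T)
    (A B A' B' : ℝ → ℝ)
    (hA : ∀ t ∈ Set.Ico (0 : ℝ) T, HasDerivWithinAt A (A' t) (Set.Ico 0 T) t)
    (hB : ∀ t ∈ Set.Ico (0 : ℝ) T, HasDerivWithinAt B (B' t) (Set.Ico 0 T) t)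
    (hA0 : 0 < A 0) (hB0 : B 0 < 0)
    (hA' : ∀ t ∈ Set.Ico (0 : ℝ) T, -(γ / 2) * (A t * B t) ≤ A' t)
    (hB' : ∀ t ∈ Set.Ico (0 : ℝ) T, B' t ≤ (γ / 2) * (A t * B t)) :
    ∀ t ∈ Set.Ico (0 : ℝ) T, A 0 ≤ A t ∧ B t ≤ B 0 :=
  riccati_sign_persistence_general γ hγ T A B A' B' hA hB hA0 hB0 hA' hB'
end

section
/- Finite-time blow-up for the Riccati-type system (step in the proof of Theorem 1.2). Let γ > 0, T > 0, and let A, B : [0,T) → ℝ be differentiable functions such that A(0) > 0, B(0) < 0, and for all t ∈ [0,T): A'(t) ≥ −(γ/2) A(t) B(t) and B'(t) ≤ (γ/2) A(t) B(t). Then T ≤ 2 / ( γ √( −A(0) B(0) ) ). -/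
/-!
Write `b = -B` and `k = γ / 2`: then `A` and `b` are positive at `0` and both have derivative at
least `k A b`. While both stay positive they are nondecreasing, so a first-exit argument keeps them
above `A 0` and `b 0` on all of `[0, T)`. By AM-GM the product `w = A b` then satisfies
`w' ≥ k w (A + b) ≥ 2 k w ^ (3/2)`, i.e. `t ↦ w(t) ^ (-1/2) + k t` is nonincreasing, and since
`w ^ (-1/2) > 0` this forces `k T ≤ w(0) ^ (-1/2)`.
-/

open Set

theorem ContinuousOn.forall_pos_of_forall_Ico_pos {f : ℝ → ℝ} {a b : ℝ}
    (hf : ContinuousOn f (Icc a b)) (ha : 0 < f a)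
    (hstep : ∀ c ∈ Ioc a b, (∀ t ∈ Ico a c, 0 < f t) → 0 < f c) :
    ∀ t ∈ Icc a b, 0 < f t := by
  by_contra! hbad
  obtain ⟨t, ht, hft⟩ := hbad
  have hcompact : IsCompact (Icc a b ∩ f ⁻¹' Iic 0) :=
    isCompact_Icc.of_isClosed_subset
      (hf.preimage_isClosed_of_isClosed isClosed_Icc isClosed_Iic) inter_subset_left
  obtain ⟨c, ⟨hc, hfc⟩, hfirst⟩ := hcompact.exists_isLeast ⟨t, ht, hft⟩
  have hac : a < c := hc.1.lt_of_ne (by rintro rfl; exact (not_le.2 ha) hfc)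
  refine not_le.2 (hstep c ⟨hac, hc.2⟩ fun s hs => ?_) hfc
  by_contra! hfs
  exact (hfirst ⟨⟨hs.1, hs.2.le.trans hc.2⟩, hfs⟩).not_gt hs.2

theorem monotoneOn_of_hasDerivWithinAt_of_subset {f f' : ℝ → ℝ} {s D : Set ℝ}
    (hf : ∀ x ∈ s, HasDerivWithinAt f (f' x) s x) (hD : Convex ℝ D) (hDs : D ⊆ s)
    (hf'₀ : ∀ x ∈ interior D, 0 ≤ f' x) : MonotoneOn f D :=
  monotoneOn_of_hasDerivWithinAt_nonneg hD
    (fun x hx => ((hf x (hDs hx)).continuousWithinAt).mono hDs)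
    (fun x hx => (hf x (hDs (interior_subset hx))).mono (interior_subset.trans hDs)) hf'₀

theorem antitoneOn_of_hasDerivWithinAt_of_subset {f f' : ℝ → ℝ} {s D : Set ℝ}
    (hf : ∀ x ∈ s, HasDerivWithinAt f (f' x) s x) (hD : Convex ℝ D) (hDs : D ⊆ s)
    (hf'₀ : ∀ x ∈ interior D, f' x ≤ 0) : AntitoneOn f D :=
  antitoneOn_of_hasDerivWithinAt_nonpos hD
    (fun x hx => ((hf x (hDs hx)).continuousWithinAt).mono hDs)
    (fun x hx => (hf x (hDs (interior_subset hx))).mono (interior_subset.trans hDs)) hf'₀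

structure IsRiccatiSupersolution (k T : ℝ) (a b a' b' : ℝ → ℝ) : Prop where
  hasDerivWithinAt_fst : ∀ t ∈ Ico 0 T, HasDerivWithinAt a (a' t) (Ico 0 T) t
  hasDerivWithinAt_snd : ∀ t ∈ Ico 0 T, HasDerivWithinAt b (b' t) (Ico 0 T) t
  le_deriv_fst : ∀ t ∈ Ico 0 T, k * (a t * b t) ≤ a' t
  le_deriv_snd : ∀ t ∈ Ico 0 T, k * (a t * b t) ≤ b' t

namespace IsRiccatiSupersolution

variable {k T : ℝ} {a b a' b' : ℝ → ℝ}

theorem continuousOn_fst (h : IsRiccatiSupersolution k T a b a' b') : ContinuousOn a (Ico 0 T) :=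
  fun t ht => (h.hasDerivWithinAt_fst t ht).continuousWithinAt

theorem continuousOn_snd (h : IsRiccatiSupersolution k T a b a' b') : ContinuousOn b (Ico 0 T) :=
  fun t ht => (h.hasDerivWithinAt_snd t ht).continuousWithinAt

theorem le_of_forall_Ico_pos (h : IsRiccatiSupersolution k T a b a' b') (hk : 0 ≤ k) {c : ℝ}
    (hc : c ∈ Ico 0 T) (hpos : ∀ t ∈ Ico 0 c, 0 < a t ∧ 0 < b t) :
    a 0 ≤ a c ∧ b 0 ≤ b c := by
  have hsub : Icc 0 c ⊆ Ico 0 T := Icc_subset_Ico_right hc.2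
  have hkab : ∀ t ∈ Ioo 0 c, 0 ≤ k * (a t * b t) := fun t ht =>
    mul_nonneg hk (mul_pos (hpos t ⟨ht.1.le, ht.2⟩).1 (hpos t ⟨ht.1.le, ht.2⟩).2).le
  have hmono {f f' : ℝ → ℝ} (hf : ∀ t ∈ Ico 0 T, HasDerivWithinAt f (f' t) (Ico 0 T) t)
      (hf' : ∀ t ∈ Ico 0 T, k * (a t * b t) ≤ f' t) : f 0 ≤ f c := by
    refine monotoneOn_of_hasDerivWithinAt_of_subset hf (convex_Icc 0 c) hsub (fun t ht => ?_)
      ⟨le_rfl, hc.1⟩ ⟨hc.1, le_rfl⟩ hc.1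
    rw [interior_Icc] at ht
    exact (hkab t ht).trans (hf' t (hsub (Ioo_subset_Icc_self ht)))
  exact ⟨hmono h.hasDerivWithinAt_fst h.le_deriv_fst,
    hmono h.hasDerivWithinAt_snd h.le_deriv_snd⟩

theorem apply_zero_le (h : IsRiccatiSupersolution k T a b a' b') (hk : 0 ≤ k) (ha0 : 0 < a 0)
    (hb0 : 0 < b 0) : ∀ t ∈ Ico 0 T, a 0 ≤ a t ∧ b 0 ≤ b t := by
  intro τ hτ
  have hcont : ContinuousOn (fun t => min (a t) (b t)) (Icc 0 τ) :=
    (h.continuousOn_fst.inf h.continuousOn_snd).mono (Icc_subset_Ico_right hτ.2)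
  have hpos := hcont.forall_pos_of_forall_Ico_pos (lt_min ha0 hb0) fun c hc hpos => by
    obtain ⟨hac, hbc⟩ := h.le_of_forall_Ico_pos hk ⟨hc.1.le, hc.2.trans_lt hτ.2⟩
      fun t ht => lt_min_iff.1 (hpos t ht)
    exact lt_min (ha0.trans_le hac) (hb0.trans_le hbc)
  exact h.le_of_forall_Ico_pos hk hτ fun t ht => lt_min_iff.1 (hpos t ⟨ht.1, ht.2.le⟩)

theorem hasDerivWithinAt_inv_sqrt_mul (h : IsRiccatiSupersolution k T a b a' b') {t : ℝ}
    (ht : t ∈ Ico 0 T) (hab : 0 < a t * b t) :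
    HasDerivWithinAt (fun s => (√(a s * b s))⁻¹)
      (-((a' t * b t + a t * b' t) / (2 * √(a t * b t))) / √(a t * b t) ^ 2) (Ico 0 T) t :=
  (((h.hasDerivWithinAt_fst t ht).mul (h.hasDerivWithinAt_snd t ht)).sqrt hab.ne').inv
    (Real.sqrt_pos.2 hab).ne'

theorem antitoneOn_inv_sqrt_mul_add (h : IsRiccatiSupersolution k T a b a' b') (hk : 0 ≤ k)
    (hpos : ∀ t ∈ Ico 0 T, 0 < a t ∧ 0 < b t) :
    AntitoneOn (fun t => (√(a t * b t))⁻¹ + k * t) (Ico 0 T) := by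
  refine antitoneOn_of_hasDerivWithinAt_of_subset (s := Ico 0 T)
    (fun t ht => (h.hasDerivWithinAt_inv_sqrt_mul ht
      (mul_pos (hpos t ht).1 (hpos t ht).2)).add ((hasDerivWithinAt_id t _).const_mul k))
    (convex_Ico 0 T) subset_rfl fun t ht => ?_
  have ht := interior_subset ht
  obtain ⟨hat, hbt⟩ := hpos t ht
  set s := √(a t * b t)
  have hs : 0 < s := Real.sqrt_pos.2 (mul_pos hat hbt)
  have hs2 : s ^ 2 = a t * b t := Real.sq_sqrt (mul_pos hat hbt).le
  have hamgm : 2 * s ≤ a t + b t := by nlinarith [sq_nonneg (a t - b t)]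
  have hw' : 2 * k * s ^ 3 ≤ a' t * b t + a t * b' t := calc
    2 * k * s ^ 3 = k * (a t * b t) * (2 * s) := by rw [← hs2]; ring
    _ ≤ k * (a t * b t) * (a t + b t) := by gcongr
    _ = k * (a t * b t) * b t + a t * (k * (a t * b t)) := by ring
    _ ≤ a' t * b t + a t * b' t := by
      gcongr
      exacts [h.le_deriv_fst t ht, h.le_deriv_snd t ht]
  have hval : -((a' t * b t + a t * b' t) / (2 * s)) / s ^ 2 + k * 1 =
      (2 * k * s ^ 3 - (a' t * b t + a t * b' t)) / (2 * s ^ 3) := by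
    field_simp
    ring
  rw [hval]
  exact div_nonpos_of_nonpos_of_nonneg (by linarith) (by positivity)

theorem le_inv_mul_sqrt (h : IsRiccatiSupersolution k T a b a' b') (hk : 0 < k)
    (ha0 : 0 < a 0) (hb0 : 0 < b 0) : T ≤ (k * √(a 0 * b 0))⁻¹ := by
  have hpos : ∀ t ∈ Ico 0 T, 0 < a t ∧ 0 < b t := fun t ht =>
    ⟨ha0.trans_le (h.apply_zero_le hk.le ha0 hb0 t ht).1,
      hb0.trans_le (h.apply_zero_le hk.le ha0 hb0 t ht).2⟩
  have hanti := h.antitoneOn_inv_sqrt_mul_add hk.le hpos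
  have hlt : ∀ τ ∈ Ico 0 T, k * τ < (√(a 0 * b 0))⁻¹ := fun τ hτ => by
    have hle := hanti ⟨le_rfl, hτ.1.trans_lt hτ.2⟩ hτ hτ.1
    have hinv_pos : 0 < (√(a τ * b τ))⁻¹ :=
      inv_pos.2 (Real.sqrt_pos.2 (mul_pos (hpos τ hτ).1 (hpos τ hτ).2))
    simp only [mul_zero, add_zero] at hle
    linarith
  refine le_of_not_gt fun hT => ?_
  have hself := hlt _ ⟨by positivity, hT⟩
  rw [mul_inv, ← mul_assoc, mul_inv_cancel₀ hk.ne', one_mul] at hself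
  exact hself.false

end IsRiccatiSupersolution

theorem riccati_blowup_general
    (γ : ℝ) (hγ : 0 < γ) (T : ℝ)
    (A B A' B' : ℝ → ℝ)
    (hA : ∀ t ∈ Set.Ico (0 : ℝ) T, HasDerivWithinAt A (A' t) (Set.Ico 0 T) t)
    (hB : ∀ t ∈ Set.Ico (0 : ℝ) T, HasDerivWithinAt B (B' t) (Set.Ico 0 T) t)
    (hA0 : 0 < A 0) (hB0 : B 0 < 0)
    (hA' : ∀ t ∈ Set.Ico (0 : ℝ) T, -(γ / 2) * (A t * B t) ≤ A' t)
    (hB' : ∀ t ∈ Set.Ico (0 : ℝ) T, B' t ≤ (γ / 2) * (A t * B t)) :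
    T ≤ 2 / (γ * Real.sqrt (-(A 0 * B 0))) := by
  have hsuper : IsRiccatiSupersolution (γ / 2) T A (fun t => -B t) A' (fun t => -B' t) :=
    ⟨hA, fun t ht => (hB t ht).neg, fun t ht => by linarith [hA' t ht],
      fun t ht => by linarith [hB' t ht]⟩
  calc T ≤ (γ / 2 * √(A 0 * -B 0))⁻¹ :=
        hsuper.le_inv_mul_sqrt (by positivity) hA0 (neg_pos.2 hB0)
    _ = 2 / (γ * √(-(A 0 * B 0))) := by rw [mul_neg]; ring

/-- Finite-time blow-up for the Riccati-type system: if `A(0) > 0 > B(0)` and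
`A' ≥ -(γ/2) A B`, `B' ≤ (γ/2) A B` on `[0,T)`, then `T ≤ 2/(γ √(-A(0)B(0)))`. -/
theorem riccati_blowup
    (γ : ℝ) (hγ : 0 < γ) (T : ℝ) (hT : 0 < T)
    (A B A' B' : ℝ → ℝ)
    (hA : ∀ t ∈ Set.Ico (0 : ℝ) T, HasDerivWithinAt A (A' t) (Set.Ico 0 T) t)
    (hB : ∀ t ∈ Set.Ico (0 : ℝ) T, HasDerivWithinAt B (B' t) (Set.Ico 0 T) t)
    (hA0 : 0 < A 0) (hB0 : B 0 < 0)
    (hA' : ∀ t ∈ Set.Ico (0 : ℝ) T, -(γ / 2) * (A t * B t) ≤ A' t)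
    (hB' : ∀ t ∈ Set.Ico (0 : ℝ) T, B' t ≤ (γ / 2) * (A t * B t)) :
    T ≤ 2 / (γ * Real.sqrt (-(A 0 * B 0))) :=
  riccati_blowup_general γ hγ T A B A' B' hA hB hA0 hB0 hA' hB'
end

section
/- Pointwise consequence of the convolution estimate used in inequality (3.3): under the hypotheses of the convolution estimate in the minimum case, the full convolution with p is bounded below. Let γ > 0, let f : ℝ → ℝ be twice continuously differentiable with f'' ≥ γ on ℝ, let g : ℝ → ℝ be continuous attaining its minimum m = min_ℝ g at some c ∈ ℝ, assume φ = √((g − m)/γ) is K-Lipschitz with 0 < K ≤ 1, and set α = (√(1+8K²) − 1)/(4K²). Let u : ℝ → ℝ be a bounded continuously differentiable function with bounded derivative u'. Then for every x ∈ ℝ, ( p * [ g(u) + (f''(u)/2) u'² ] )(x) ≥ α ( g(u(x)) − m ) + m, and consequently g(u(x)) − ( p * [ g(u) + (f''(u)/2) u'² ] )(x) ≤ (1 − α)( g(u(x)) − m ) = 2K²α² γ φ(u(x))². -/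
/-!
Since `f'' ≥ γ` and `g - m = γ φ²`, the integrand dominates `m + γ (φ(u)² + u'²/2)`, so it suffices
to bound `(p * (φ(u)² + u'²/2))(x)` below by `α φ(u x)²`. The kernel `p` is half the weight
`e^{-t} dt` on each of the two half-lines issuing from `x`. Along one of them, `v t = u (x ± t)`,
the Lipschitz bound gives `|φ (v t)| ≥ b t := |φ (v 0)| - K ∫₀ᵗ |v'|`, and AM-GM together with
`2K²α² + α = 1` gives `-d/dt (α e^{-t} (b t)₊²) ≤ e^{-t} (φ(v t)² + v'(t)²/2)`. Integrating over
`[0, T]` and letting `T → ∞` yields `α φ(v 0)²`; taking the positive part of `b` means the barrier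
need not be stopped at its first zero.
-/

open MeasureTheory Set Filter Topology Real

theorem pker_nonneg (x : ℝ) : 0 ≤ pker x := by unfold pker; positivity

theorem pker_neg (x : ℝ) : pker (-x) = pker x := by simp [pker]

theorem pker_of_pos {x : ℝ} (hx : 0 < x) : pker x = exp (-x) / 2 := by
  rw [pker, abs_of_pos hx]; ring

theorem integrable_pker : Integrable pker := by
  have hIoi : IntegrableOn pker (Ioi 0) :=
    IntegrableOn.congr_fun ((integrableOn_exp_neg_Ioi 0).div_const 2)
      (fun x hx => (pker_of_pos hx).symm) measurableSet_Ioi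
  have hIic : IntegrableOn pker (Iic 0) :=
    IntegrableOn.congr_fun ((integrableOn_exp_Iic 0).div_const 2)
      (fun x hx => by rw [pker, abs_of_nonpos hx, neg_neg]; ring) measurableSet_Iic
  rw [← integrableOn_univ, ← Iic_union_Ioi (a := (0 : ℝ))]
  exact hIic.union hIoi

theorem integrable_pker_sub_mul {Q : ℝ → ℝ} {B : ℝ} (hQ : AEStronglyMeasurable Q)
    (hB : ∀ y, |Q y| ≤ B) (x : ℝ) : Integrable fun y => pker (x - y) * Q y :=
  (integrable_pker.comp_sub_left x).mul_bdd hQ (ae_of_all _ hB)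

theorem integrableOn_exp_neg_mul {F : ℝ → ℝ} {B : ℝ} (hF : AEStronglyMeasurable F)
    (hB : ∀ t, |F t| ≤ B) : IntegrableOn (fun t => exp (-t) * F t) (Ioi 0) :=
  (integrableOn_exp_neg_Ioi 0).mul_bdd hF.restrict (ae_of_all _ hB)

theorem integral_pker_sub_mul {Q : ℝ → ℝ} {x : ℝ}
    (hQ : Integrable fun y => pker (x - y) * Q y) :
    ∫ y, pker (x - y) * Q y =
      (∫ t in Ioi 0, exp (-t) * Q (x + t)) / 2 + (∫ t in Ioi 0, exp (-t) * Q (x - t)) / 2 := by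
  have hQ' : Integrable fun z => pker z * Q (x - z) := by
    simpa using hQ.comp_sub_left x
  have hhalf : ∀ R : ℝ → ℝ, ∫ t in Ioi 0, pker t * R t = (∫ t in Ioi 0, exp (-t) * R t) / 2 :=
    fun R => by
      rw [← integral_div]
      refine setIntegral_congr_fun measurableSet_Ioi fun t ht => ?_
      rw [pker_of_pos ht]; ring
  calc ∫ y, pker (x - y) * Q y = ∫ z, pker z * Q (x - z) := by
        simpa using integral_sub_left_eq_self (fun z => pker z * Q (x - z)) volume x
    _ = (∫ z in Iic 0, pker z * Q (x - z)) + ∫ z in Ioi 0, pker z * Q (x - z) :=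
        (intervalIntegral.integral_Iic_add_Ioi hQ'.integrableOn hQ'.integrableOn).symm
    _ = (∫ t in Ioi 0, pker t * Q (x + t)) + ∫ t in Ioi 0, pker t * Q (x - t) := by
        rw [← neg_zero, ← integral_comp_neg_Ioi]
        simp [pker_neg]
    _ = _ := by rw [hhalf, hhalf]

theorem integral_pker_sub (x : ℝ) : ∫ y, pker (x - y) = 1 := by
  have := integral_pker_sub_mul (Q := fun _ => 1) (x := x)
    (integrable_pker_sub_mul aestronglyMeasurable_const (fun _ => le_refl _) x)
  simp only [mul_one, integral_exp_neg_Ioi_zero] at this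
  linarith

theorem exists_bound_comp {F : ℝ × ℝ → ℝ} (hF : Continuous F) {u w : ℝ → ℝ} {C : ℝ}
    (hC : ∀ y, |u y| ≤ C ∧ |w y| ≤ C) : ∃ B, ∀ y, |F (u y, w y)| ≤ B := by
  obtain ⟨B, hB⟩ := (isCompact_Icc.prod isCompact_Icc).exists_bound_of_continuousOn
    (s := Icc (-C) C ×ˢ Icc (-C) C) hF.continuousOn
  exact ⟨B, fun y => hB _ ⟨abs_le.1 (hC y).1, abs_le.1 (hC y).2⟩⟩

theorem hasDerivAt_max_zero_sq (x : ℝ) :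
    HasDerivAt (fun y : ℝ => max y 0 ^ 2) (2 * max x 0) x := by
  rcases lt_trichotomy x 0 with hx | rfl | hx
  · rw [max_eq_right hx.le, mul_zero]
    refine (hasDerivAt_const x (0 : ℝ)).congr_of_eventuallyEq ?_
    filter_upwards [eventually_lt_nhds hx] with y hy
    simp [max_eq_right hy.le]
  · rw [max_self, mul_zero, hasDerivAt_iff_isLittleO_nhds_zero]
    refine Asymptotics.IsBigO.trans_isLittleO ?_ (Asymptotics.isLittleO_pow_id one_lt_two)
    refine Asymptotics.isBigO_of_le _ fun h => ?_
    simp only [zero_add, max_self, smul_zero, sub_zero, norm_pow, Real.norm_eq_abs, ne_eq,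
      OfNat.ofNat_ne_zero, not_false_eq_true, zero_pow]
    rw [abs_of_nonneg (by positivity)]
    exact pow_le_pow_left₀ (le_max_right h 0) (max_le (le_abs_self h) (abs_nonneg h)) 2
  · rw [max_eq_left hx.le]
    refine (hasDerivAt_pow 2 x).congr_of_eventuallyEq ?_ |>.congr_deriv (by ring)
    filter_upwards [eventually_gt_nhds hx] with y hy
    simp [max_eq_left hy.le]

theorem mul_sub_two_mul_le_sq_add {K α β d V w : ℝ} (hαK : 2 * K ^ 2 * α ^ 2 + α = 1)
    (hα : 0 ≤ α) (hβ : 0 ≤ β) (hβV : β ≤ |V|) (hd : -d ≤ K * |w|) :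
    α * (β ^ 2 - 2 * β * d) ≤ V ^ 2 + w ^ 2 / 2 := by
  have hdrift : α * (β ^ 2 - 2 * β * d) ≤ α * (β ^ 2 + 2 * K * β * |w|) := by
    gcongr
    nlinarith
  have hamgm : α * (β ^ 2 + 2 * K * β * |w|) ≤ β ^ 2 + |w| ^ 2 / 2 := by
    nlinarith [sq_nonneg (2 * K * α * β - |w|)]
  have hsq : β ^ 2 ≤ V ^ 2 := sq_abs V ▸ pow_le_pow_left₀ hβ hβV 2
  rw [← sq_abs w]
  linarith

theorem mul_sq_sub_le_integral {b b' V W : ℝ → ℝ} {K α T : ℝ}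
    (hαK : 2 * K ^ 2 * α ^ 2 + α = 1) (hα : 0 ≤ α) (hT : 0 ≤ T)
    (hb : ∀ t, HasDerivAt b (b' t) t) (hb' : ∀ t ∈ Ioo 0 T, -b' t ≤ K * |W t|)
    (hbV : ∀ t ∈ Ioo 0 T, max (b t) 0 ≤ |V t|)
    (hint : IntegrableOn (fun t => exp (-t) * (V t ^ 2 + W t ^ 2 / 2)) (Ioc 0 T)) :
    α * (max (b 0) 0 ^ 2 - exp (-T) * max (b T) 0 ^ 2) ≤
      ∫ t in 0..T, exp (-t) * (V t ^ 2 + W t ^ 2 / 2) := by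
  set G : ℝ → ℝ := fun t => -(α * (exp (-t) * max (b t) 0 ^ 2))
  have hG : ∀ t, HasDerivAt G
      (exp (-t) * (α * (max (b t) 0 ^ 2 - 2 * max (b t) 0 * b' t))) t := fun t => by
    have hexp : HasDerivAt (fun s => exp (-s)) (-exp (-t)) t := by
      simpa using (hasDerivAt_neg t).exp
    have hsq := (hasDerivAt_max_zero_sq (b t)).comp t (hb t)
    exact ((hexp.mul hsq).const_mul α).neg.congr_deriv (by simp only [Function.comp_apply]; ring)
  have hGT : G T - G 0 = α * (max (b 0) 0 ^ 2 - exp (-T) * max (b T) 0 ^ 2) := by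
    simp only [G, neg_zero, exp_zero]
    ring
  rw [← hGT]
  refine intervalIntegral.sub_le_integral_of_hasDeriv_right_of_le hT
    (HasDerivAt.continuousOn fun t _ => hG t) (fun t _ => (hG t).hasDerivWithinAt)
    ((integrableOn_Icc_iff_integrableOn_Ioc).2 hint)
    fun t ht => mul_le_mul_of_nonneg_left ?_ (exp_pos _).le
  exact mul_sub_two_mul_le_sq_add hαK hα (le_max_right _ _) (hbV t ht) (hb' t ht)

theorem abs_sub_le_integral_abs_deriv_s15 {v v' : ℝ → ℝ} (hv : ∀ t, HasDerivAt v (v' t) t)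
    (hv' : Continuous v') {t : ℝ} (ht : 0 ≤ t) : |v t - v 0| ≤ ∫ s in 0..t, |v' s| := by
  rw [← intervalIntegral.integral_eq_sub_of_hasDerivAt (fun s _ => hv s)
    (hv'.intervalIntegrable 0 t)]
  exact intervalIntegral.abs_integral_le_integral_abs ht

theorem mul_sq_le_integral_exp_neg {φ v v' : ℝ → ℝ} {K α : ℝ} (hK : 0 ≤ K)
    (hαK : 2 * K ^ 2 * α ^ 2 + α = 1) (hα : 0 ≤ α) (hφ : ∀ a b, |φ a - φ b| ≤ K * |a - b|)
    (hv : ∀ t, HasDerivAt v (v' t) t) (hv' : Continuous v')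
    (hint : IntegrableOn (fun t => exp (-t) * (φ (v t) ^ 2 + v' t ^ 2 / 2)) (Ioi 0)) :
    α * φ (v 0) ^ 2 ≤ ∫ t in Ioi 0, exp (-t) * (φ (v t) ^ 2 + v' t ^ 2 / 2) := by
  set a := |φ (v 0)|
  set b : ℝ → ℝ := fun t => a - K * ∫ s in 0..t, |v' s|
  have hb : ∀ t, HasDerivAt b (-(K * |v' t|)) t := fun t =>
    (((hv'.abs.integral_hasStrictDerivAt 0 t).hasDerivAt).const_mul K).const_sub a
  have hb_le : ∀ t, 0 ≤ t → b t ≤ a := fun t ht => by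
    have := intervalIntegral.integral_nonneg (μ := volume) ht fun s _ => abs_nonneg (v' s)
    simp only [b]
    nlinarith
  have hbV : ∀ t, 0 ≤ t → max (b t) 0 ≤ |φ (v t)| := fun t ht => by
    refine max_le ?_ (abs_nonneg _)
    have hdisp := mul_le_mul_of_nonneg_left (abs_sub_le_integral_abs_deriv_s15 hv hv' ht) hK
    have hlip := hφ (v t) (v 0)
    have hrev := abs_sub_abs_le_abs_sub (φ (v 0)) (φ (v t))
    rw [abs_sub_comm] at hrev
    simp only [b]
    linarith
  have hb0 : max (b 0) 0 = a := by simp [b, a]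
  have htrunc : ∀ T, 0 ≤ T → α * (a ^ 2 - exp (-T) * a ^ 2) ≤
      ∫ t in Ioi 0, exp (-t) * (φ (v t) ^ 2 + v' t ^ 2 / 2) := fun T hT => calc
    α * (a ^ 2 - exp (-T) * a ^ 2)
      ≤ α * (max (b 0) 0 ^ 2 - exp (-T) * max (b T) 0 ^ 2) := by
        rw [hb0]
        gcongr
        exact max_le (hb_le T hT) (abs_nonneg _)
    _ ≤ ∫ t in 0..T, exp (-t) * (φ (v t) ^ 2 + v' t ^ 2 / 2) :=
        mul_sq_sub_le_integral hαK hα hT hb (fun t _ => by simp)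
          (fun t ht => hbV t ht.1.le) (hint.mono_set Ioc_subset_Ioi_self)
    _ ≤ ∫ t in Ioi 0, exp (-t) * (φ (v t) ^ 2 + v' t ^ 2 / 2) := by
        rw [intervalIntegral.integral_of_le hT]
        exact setIntegral_mono_set hint (.of_forall fun t => by positivity)
          Ioc_subset_Ioi_self.eventuallyLE
  have hlim : Tendsto (fun T => α * (a ^ 2 - exp (-T) * a ^ 2)) atTop (𝓝 (α * a ^ 2)) := by
    simpa using ((tendsto_exp_neg_atTop_nhds_zero.mul_const (a ^ 2)).const_sub (a ^ 2)).const_mul α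
  rw [← sq_abs]
  exact le_of_tendsto hlim (eventually_ge_atTop 0 |>.mono htrunc)

theorem mul_sq_le_integral_pker_sub_mul {φ u : ℝ → ℝ} {K α C : ℝ} (hK : 0 ≤ K)
    (hαK : 2 * K ^ 2 * α ^ 2 + α = 1) (hα : 0 ≤ α) (hφ : ∀ a b, |φ a - φ b| ≤ K * |a - b|)
    (hu : ContDiff ℝ 1 u) (hC : ∀ y, |u y| ≤ C ∧ |deriv u y| ≤ C) (x : ℝ) :
    α * φ (u x) ^ 2 ≤ ∫ y, pker (x - y) * (φ (u y) ^ 2 + deriv u y ^ 2 / 2) := by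
  have hφc : Continuous φ := (LipschitzWith.of_dist_le' hφ).continuous
  have hu₀ : Continuous u := hu.continuous
  have hu' : Continuous (deriv u) := hu.continuous_deriv_one
  have hdu : ∀ y, HasDerivAt u (deriv u y) y := fun y =>
    (hu.differentiable one_ne_zero y).hasDerivAt
  obtain ⟨B, hB⟩ := exists_bound_comp (F := fun p => φ p.1 ^ 2 + p.2 ^ 2 / 2) (by fun_prop) hC
  have hQ : Continuous fun y => φ (u y) ^ 2 + deriv u y ^ 2 / 2 := by fun_prop
  have hright : α * φ (u x) ^ 2 ≤
      ∫ t in Ioi 0, exp (-t) * (φ (u (x + t)) ^ 2 + deriv u (x + t) ^ 2 / 2) := by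
    simpa using mul_sq_le_integral_exp_neg hK hαK hα hφ (v := fun t => u (x + t))
      (fun t => (hdu (x + t)).comp_const_add x t) (by fun_prop)
      (integrableOn_exp_neg_mul (by fun_prop : Continuous fun t =>
        φ (u (x + t)) ^ 2 + deriv u (x + t) ^ 2 / 2).aestronglyMeasurable
        fun t => hB (x + t))
  have hleft : α * φ (u x) ^ 2 ≤
      ∫ t in Ioi 0, exp (-t) * (φ (u (x - t)) ^ 2 + deriv u (x - t) ^ 2 / 2) := by
    simpa [neg_sq] using mul_sq_le_integral_exp_neg hK hαK hα hφ (v := fun t => u (x - t))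
      (fun t => (hdu (x - t)).comp_const_sub x t) (by fun_prop)
      (by simpa [neg_sq] using integrableOn_exp_neg_mul (by fun_prop : Continuous fun t =>
        φ (u (x - t)) ^ 2 + deriv u (x - t) ^ 2 / 2).aestronglyMeasurable fun t => hB (x - t))
  rw [integral_pker_sub_mul (integrable_pker_sub_mul hQ.aestronglyMeasurable hB x)]
  linarith

theorem add_mul_integral_pker_sub_mul_le {Q H : ℝ → ℝ} {m γ x : ℝ} (hγ : 0 ≤ γ)
    (hQ : ∀ y, 0 ≤ Q y) (hQH : ∀ y, m + γ * Q y ≤ H y)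
    (hH : Integrable fun y => pker (x - y) * H y) :
    m + γ * ∫ y, pker (x - y) * Q y ≤ ∫ y, pker (x - y) * H y := by
  have hm : Integrable fun y => pker (x - y) * m := (integrable_pker.comp_sub_left x).mul_const m
  have hshift : ∫ y, pker (x - y) * (H y - m) = (∫ y, pker (x - y) * H y) - m := by
    simp_rw [mul_sub]
    rw [integral_sub hH hm, integral_mul_const, integral_pker_sub, one_mul]
  have hmono : ∫ y, γ * (pker (x - y) * Q y) ≤ ∫ y, pker (x - y) * (H y - m) := by
    refine integral_mono_of_nonneg (ae_of_all _ fun y => ?_) ?_ (ae_of_all _ fun y => ?_)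
    · have := pker_nonneg (x - y)
      have := hQ y
      positivity
    · simp only [mul_sub]
      exact hH.sub hm
    · dsimp only
      rw [mul_left_comm]
      exact mul_le_mul_of_nonneg_left (by linarith [hQH y]) (pker_nonneg _)
  rw [integral_const_mul] at hmono
  linarith

theorem alpha_nonneg (K : ℝ) : 0 ≤ (√(1 + 8 * K ^ 2) - 1) / (4 * K ^ 2) :=
  div_nonneg (sub_nonneg.2 (one_le_sqrt.2 (by nlinarith [sq_nonneg K]))) (by positivity)

theorem two_mul_sq_mul_alpha_sq_add_alpha {K : ℝ} (hK : K ≠ 0) :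
    2 * K ^ 2 * ((√(1 + 8 * K ^ 2) - 1) / (4 * K ^ 2)) ^ 2 +
      (√(1 + 8 * K ^ 2) - 1) / (4 * K ^ 2) = 1 := by
  have hs := sq_sqrt (show (0 : ℝ) ≤ 1 + 8 * K ^ 2 by positivity)
  set s := √(1 + 8 * K ^ 2)
  field_simp
  linear_combination 2 * hs

theorem full_convolution_estimate_min_general
    (γ : ℝ) (hγ : 0 < γ)
    (f : ℝ → ℝ) (hf : ContDiff ℝ 2 f) (hconv : ∀ x : ℝ, γ ≤ deriv (deriv f) x)
    (g : ℝ → ℝ) (hg : Continuous g)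
    (m : ℝ) (hmin : ∀ x : ℝ, m ≤ g x)
    (K : ℝ) (hK0 : 0 < K)
    (φ : ℝ → ℝ) (hφ : ∀ x : ℝ, φ x = Real.sqrt ((g x - m) / γ))
    (hLip : ∀ a b : ℝ, |φ a - φ b| ≤ K * |a - b|)
    (α : ℝ) (hα : α = (Real.sqrt (1 + 8 * K ^ 2) - 1) / (4 * K ^ 2))
    (u : ℝ → ℝ) (hu : ContDiff ℝ 1 u)
    (hbd : ∃ C : ℝ, ∀ x : ℝ, |u x| ≤ C ∧ |deriv u x| ≤ C) :
    ∀ x : ℝ,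
      (α * (g (u x) - m) + m ≤
        ∫ y : ℝ, pker (x - y) *
          (g (u y) + deriv (deriv f) (u y) / 2 * (deriv u y) ^ 2)) ∧
      (g (u x) -
        (∫ y : ℝ, pker (x - y) *
          (g (u y) + deriv (deriv f) (u y) / 2 * (deriv u y) ^ 2)) ≤
        (1 - α) * (g (u x) - m)) ∧
      (1 - α) * (g (u x) - m) = 2 * K ^ 2 * α ^ 2 * γ * (φ (u x)) ^ 2 := by
  intro x
  obtain ⟨C, hC⟩ := hbd
  have hαK : 2 * K ^ 2 * α ^ 2 + α = 1 := hα ▸ two_mul_sq_mul_alpha_sq_add_alpha hK0.ne'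
  have hgφ : ∀ z, g z - m = γ * φ z ^ 2 := fun z => by
    rw [hφ, sq_sqrt (div_nonneg (sub_nonneg.2 (hmin z)) hγ.le)]
    field_simp
  have hf'' : Continuous (deriv (deriv f)) := (hf.iterate_deriv' 0 2).continuous
  have hu₀ : Continuous u := hu.continuous
  have hu' : Continuous (deriv u) := hu.continuous_deriv_one
  obtain ⟨B, hB⟩ := exists_bound_comp
    (F := fun p => g p.1 + deriv (deriv f) p.1 / 2 * p.2 ^ 2) (by fun_prop) hC
  have hH := integrable_pker_sub_mul (by fun_prop : Continuous fun y =>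
    g (u y) + deriv (deriv f) (u y) / 2 * deriv u y ^ 2).aestronglyMeasurable hB x
  have hpointwise : ∀ y, m + γ * (φ (u y) ^ 2 + deriv u y ^ 2 / 2) ≤
      g (u y) + deriv (deriv f) (u y) / 2 * deriv u y ^ 2 := fun y => by
    have := mul_le_mul_of_nonneg_right (hconv (u y)) (sq_nonneg (deriv u y))
    linarith [hgφ (u y)]
  have hdominate := add_mul_integral_pker_sub_mul_le hγ.le (fun y => by positivity) hpointwise hH
  have hlower := mul_le_mul_of_nonneg_left
    (mul_sq_le_integral_pker_sub_mul hK0.le hαK (hα ▸ alpha_nonneg K) hLip hu hC x) hγ.le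
  have hfirst : α * (g (u x) - m) + m ≤
      ∫ y, pker (x - y) * (g (u y) + deriv (deriv f) (u y) / 2 * deriv u y ^ 2) := by
    rw [hgφ]
    linarith
  refine ⟨hfirst, by linarith, ?_⟩
  rw [hgφ]
  linear_combination -(γ * φ (u x) ^ 2) * hαK

/-- Pointwise consequence of the convolution estimate (minimum case) used in (3.3):
`(p * (g(u) + f''(u)/2 u'²))(x) ≥ α (g(u(x)) - m) + m`, and consequently
`g(u(x)) - (p * (g(u) + f''(u)/2 u'²))(x) ≤ (1-α)(g(u(x)) - m) = 2K²α²γ φ(u(x))²`. -/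
theorem full_convolution_estimate_min
    (γ : ℝ) (hγ : 0 < γ)
    (f : ℝ → ℝ) (hf : ContDiff ℝ 2 f) (hconv : ∀ x : ℝ, γ ≤ deriv (deriv f) x)
    (g : ℝ → ℝ) (hg : Continuous g)
    (c m : ℝ) (hgc : g c = m) (hmin : ∀ x : ℝ, m ≤ g x)
    (K : ℝ) (hK0 : 0 < K) (hK1 : K ≤ 1)
    (φ : ℝ → ℝ) (hφ : ∀ x : ℝ, φ x = Real.sqrt ((g x - m) / γ))
    (hLip : ∀ a b : ℝ, |φ a - φ b| ≤ K * |a - b|)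
    (α : ℝ) (hα : α = (Real.sqrt (1 + 8 * K ^ 2) - 1) / (4 * K ^ 2))
    (u : ℝ → ℝ) (hu : ContDiff ℝ 1 u)
    (hbd : ∃ C : ℝ, ∀ x : ℝ, |u x| ≤ C ∧ |deriv u x| ≤ C) :
    ∀ x : ℝ,
      (α * (g (u x) - m) + m ≤
        ∫ y : ℝ, pker (x - y) *
          (g (u y) + deriv (deriv f) (u y) / 2 * (deriv u y) ^ 2)) ∧
      (g (u x) -
        (∫ y : ℝ, pker (x - y) *
          (g (u y) + deriv (deriv f) (u y) / 2 * (deriv u y) ^ 2)) ≤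
        (1 - α) * (g (u x) - m)) ∧
      (1 - α) * (g (u x) - m) = 2 * K ^ 2 * α ^ 2 * γ * (φ (u x)) ^ 2 :=
  full_convolution_estimate_min_general γ hγ f hf hconv g hg m hmin K hK0 φ hφ hLip α hα u hu hbd
end
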